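/- Let h(p) = −p·log₂ p − (1−p)·log₂(1−p) for p ∈ (0,1), with h(0) = h(1) = 0. Then 1 − h(1/4) is the greatest element of the set { 1 − h((1−x)/2) − max( h((1−u)/2), h((1−v)/2) ) : x ∈ [−1,1], u ∈ [0,1], v ∈ [0,1], x² + 2·min(u,v) ≤ 2 }; that is, every element of the set is ≤ 1 − h(1/4), and this value is attained (e.g., at x = 1, u = v = 1/2). -/

import Mathlib

/-!
With `q = (1 - x) / 2` and `p = (1 - min u v) / 2 ∈ [0, 1/2]` the rate is at most
`1 - h q - h p` and the constraint reads `x² ≤ 4p`, so it suffices that `h (1/4) ≤ h q + h p`.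
For `p ≥ 1/4` this is monotonicity of `h` on `[0, 1/2]`. For `p < 1/4`, concavity of `h` gives
the chord bound `h p ≥ 4p · h (1/4)` and, comparing `h` with chords through `(1/4, h (1/4))`,
`h q ≥ 4q(1 - q) · h (1/4) = (1 - x²) · h (1/4) ≥ (1 - 4p) · h (1/4)`.
-/

/-- Binary entropy with logarithm base 2 (by convention `h 0 = h 1 = 0`,
which holds automatically since `Real.logb 2 0 = 0`). -/
noncomputable def binEnt (p : ℝ) : ℝ :=
  -(p * Real.logb 2 p) - (1 - p) * Real.logb 2 (1 - p)

open Real Set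

lemma binEnt_eq_binEntropy_div_log_two (p : ℝ) : binEnt p = binEntropy p / log 2 := by
  rw [binEnt, binEntropy, log_inv, log_inv, logb, logb]
  ring

lemma half_log_two_le_binEntropy_quarter : log 2 / 2 ≤ binEntropy (1 / 4) := by
  have := strictConcave_binEntropy.concaveOn.2 (show (0 : ℝ) ∈ Icc 0 1 by norm_num)
    (show (1 / 2 : ℝ) ∈ Icc 0 1 by norm_num) (show (0 : ℝ) ≤ 1 / 2 by norm_num)
    (show (0 : ℝ) ≤ 1 / 2 by norm_num) (by norm_num)
  rw [one_div 2, binEntropy_two_inv] at this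
  norm_num at this
  linarith

lemma mul_binEntropy_quarter_le {p : ℝ} (hp₀ : 0 ≤ p) (hp₁ : p ≤ 1 / 4) :
    4 * p * binEntropy (1 / 4) ≤ binEntropy p := by
  have := strictConcave_binEntropy.concaveOn.2 (show (0 : ℝ) ∈ Icc 0 1 by norm_num)
    (show (1 / 4 : ℝ) ∈ Icc 0 1 by norm_num) (show 0 ≤ 1 - 4 * p by linarith)
    (show 0 ≤ 4 * p by linarith) (by ring)
  simp only [smul_eq_mul, binEntropy_zero] at this
  rw [show (1 - 4 * p) * 0 + 4 * p * (1 / 4) = p by ring] at this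
  linarith

lemma binEntropy_quarter_half_chord_le {q : ℝ} (hq₀ : 1 / 4 ≤ q) (hq₁ : q ≤ 1 / 2) :
    (2 - 4 * q) * binEntropy (1 / 4) + (4 * q - 1) * log 2 ≤ binEntropy q := by
  have := strictConcave_binEntropy.concaveOn.2 (show (1 / 4 : ℝ) ∈ Icc 0 1 by norm_num)
    (show (1 / 2 : ℝ) ∈ Icc 0 1 by norm_num) (show 0 ≤ 2 - 4 * q by linarith)
    (show 0 ≤ 4 * q - 1 by linarith) (by ring)
  rw [one_div 2, binEntropy_two_inv] at this
  simp only [smul_eq_mul] at this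
  rw [show (2 - 4 * q) * (1 / 4) + (4 * q - 1) * 2⁻¹ = q by ring] at this
  linarith

lemma four_mul_mul_one_sub_mul_binEntropy_quarter_le {q : ℝ} (hq₀ : 0 ≤ q) (hq₁ : q ≤ 1) :
    4 * q * (1 - q) * binEntropy (1 / 4) ≤ binEntropy q := by
  wlog hq : q ≤ 1 / 2 generalizing q
  · simpa [mul_comm, mul_left_comm, mul_assoc] using
      this (q := 1 - q) (by linarith) (by linarith) (by linarith)
  rcases le_total q (1 / 4) with hq' | hq'
  · have := mul_binEntropy_quarter_le hq₀ hq'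
    have hc : 0 ≤ binEntropy (1 / 4) := binEntropy_nonneg (by norm_num) (by norm_num)
    nlinarith [mul_nonneg (mul_nonneg hq₀ hq₀) hc]
  · have := binEntropy_quarter_half_chord_le hq' hq
    have hc := half_log_two_le_binEntropy_quarter
    have hL := binEntropy_le_log_two (p := 1 / 4)
    -- with `c = h (1/4)`, `L = log 2`:
    -- `4c · (chord − 4q(1 − q)c) = (4cq + 2L − 4c)² + 4(2c − L)(L − c)`
    nlinarith [sq_nonneg (4 * binEntropy (1 / 4) * q + 2 * log 2 - 4 * binEntropy (1 / 4)),
      mul_nonneg (by linarith : 0 ≤ 2 * binEntropy (1 / 4) - log 2) (sub_nonneg.2 hL),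
      log_pos one_lt_two]

lemma binEntropy_quarter_le_add {x m : ℝ} (hx : x ∈ Icc (-1) 1) (hm : m ∈ Icc 0 1)
    (hxm : x ^ 2 + 2 * m ≤ 2) :
    binEntropy (1 / 4) ≤ binEntropy ((1 - x) / 2) + binEntropy ((1 - m) / 2) := by
  obtain ⟨hx₀, hx₁⟩ := hx
  obtain ⟨hm₀, hm₁⟩ := hm
  have hq : 0 ≤ binEntropy ((1 - x) / 2) := binEntropy_nonneg (by linarith) (by linarith)
  rcases le_total (1 / 4) ((1 - m) / 2) with hp | hp
  · have := binEntropy_strictMonoOn.monotoneOn (a := 1 / 4) (b := (1 - m) / 2)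
      (by norm_num) ⟨by linarith, by linarith⟩ hp
    linarith
  · have hp' := mul_binEntropy_quarter_le (p := (1 - m) / 2) (by linarith) hp
    have hq' := four_mul_mul_one_sub_mul_binEntropy_quarter_le (q := (1 - x) / 2)
      (by linarith) (by linarith)
    nlinarith [binEntropy_nonneg (p := 1 / 4) (by norm_num) (by norm_num)]

lemma binEnt_quarter_le_add {x m : ℝ} (hx : x ∈ Icc (-1) 1) (hm : m ∈ Icc 0 1)
    (hxm : x ^ 2 + 2 * m ≤ 2) :
    binEnt (1 / 4) ≤ binEnt ((1 - x) / 2) + binEnt ((1 - m) / 2) := by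
  simp only [binEnt_eq_binEntropy_div_log_two, ← add_div]
  exact div_le_div_of_nonneg_right (binEntropy_quarter_le_add hx hm hxm) (log_nonneg one_le_two)

/-- **Maximal tripartite BB84 key rate in a three-node pair-entangled network.**
`1 − h(1/4)` is the greatest element of the set of values
`1 − h((1−x)/2) − max (h((1−u)/2)) (h((1−v)/2))` over `x ∈ [−1,1]`, `u, v ∈ [0,1]`
subject to the network constraint `x² + 2·min u v ≤ 2`. -/
theorem stmt2 :
    IsGreatest
      { r : ℝ | ∃ x u v : ℝ, x ∈ Set.Icc (-1 : ℝ) 1 ∧ u ∈ Set.Icc (0 : ℝ) 1 ∧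
          v ∈ Set.Icc (0 : ℝ) 1 ∧ x ^ 2 + 2 * min u v ≤ 2 ∧
          r = 1 - binEnt ((1 - x) / 2) - max (binEnt ((1 - u) / 2)) (binEnt ((1 - v) / 2)) }
      (1 - binEnt (1 / 4)) := by
  refine ⟨⟨1, 1 / 2, 1 / 2, by norm_num, by norm_num, by norm_num, by norm_num, ?_⟩, ?_⟩
  · norm_num [binEnt]
  rintro r ⟨x, u, v, hx, hu, hv, hxuv, rfl⟩
  have hmin :
      binEnt ((1 - min u v) / 2) ≤ max (binEnt ((1 - u) / 2)) (binEnt ((1 - v) / 2)) := by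
    rcases min_choice u v with h | h <;> simp [h]
  have hm : min u v ∈ Icc 0 1 := ⟨le_min hu.1 hv.1, (min_le_left u v).trans hu.2⟩
  linarith [binEnt_quarter_le_add hx hm hxuv]
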